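/- arXiv:0802.1593 — 2 statements merged into one kernel-verified Lean document; each statement's English description precedes it below -/
import Mathlib

section
/- Let $2 \le p < \infty$, $(\Omega,\mu)$ a probability space, and $f_1,\dots,f_n \in L_p(\Omega)$ independent mean-zero random variables. Then there is a constant $c_p$ depending only on $p$ such that $\frac{1}{c_p} \max\{ (\sum_{k=1}^n \|f_k\|_p^p)^{1/p}, (\sum_{k=1}^n \|f_k\|_2^2)^{1/2} \} \le \| \sum_{k=1}^n f_k \|_p \le c_p \max\{ (\sum_{k=1}^n \|f_k\|_p^p)^{1/p}, (\sum_{k=1}^n \|f_k\|_2^2)^{1/2} \}$. -/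
/-!
Pointwise, `|a + b| ^ p` lies between `|a| ^ p + p |a| ^ (p - 2) a b + (|b| / 2) ^ p` and
`|a| ^ p + p |a| ^ (p - 2) a b + D (|a| ^ (p - 2) b ^ 2 + |b| ^ p)`. Take `a` a partial sum `S`
and `b` a further independent mean-zero summand: the linear term integrates to zero and Jensen gives
`E |S| ^ (p - 2) ≤ (E |S| ^ p) ^ ((p - 2) / p)`. Adding the summands one at a time yields
`E |S| ^ p ≥ 2 ^ (-p) ∑ E |f_k| ^ p`, shows that `E |S| ^ p` only grows along the way, and hence
`E |S| ^ p ≤ D ((E |S| ^ p) ^ ((p - 2) / p) ∑ E f_k ^ 2 + ∑ E |f_k| ^ p)`; solving this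
self-improving inequality gives the upper bound. The `L_2` part of the lower bound is additivity of
variances together with `‖S‖_2 ≤ ‖S‖_p`.
-/

open MeasureTheory ProbabilityTheory Real

lemma abs_rpow_sub_two_mul_sq {p : ℝ} (hp : p ≠ 0) (a : ℝ) : |a| ^ (p - 2) * a ^ 2 = |a| ^ p := by
  rw [← sq_abs, ← rpow_natCast, ← rpow_add' (abs_nonneg a) (by simpa using hp)]
  norm_num

lemma one_add_mul_add_half_abs_rpow_le {p : ℝ} (hp : 2 ≤ p) (t : ℝ) :
    1 + p * t + (|t| / 2) ^ p ≤ |1 + t| ^ p := by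
  rcases le_or_gt |t| 2 with ht | ht
  · have bernoulli : 1 + p * t + p / 2 * t ^ 2 ≤ |1 + t| ^ p := by
      have h := one_add_mul_self_le_rpow_one_add
        (by nlinarith [sq_nonneg (1 + t)] : -1 ≤ 2 * t + t ^ 2) (by linarith : 1 ≤ p / 2)
      rw [show 1 + (2 * t + t ^ 2) = |1 + t| ^ (2 : ℝ) by rw [rpow_two, sq_abs]; ring,
        ← rpow_mul (abs_nonneg _), show 2 * (p / 2) = p by ring] at h
      linarith
    have small : (|t| / 2) ^ p ≤ (|t| / 2) ^ (2 : ℝ) :=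
      rpow_le_rpow_of_exponent_ge' (by positivity) (by linarith) zero_le_two hp
    rw [rpow_two, div_pow, sq_abs] at small
    nlinarith [sq_nonneg t]
  rcases lt_or_gt_of_ne (show t ≠ 0 by rintro rfl; norm_num at ht) with hneg | hpos
  · rw [abs_of_neg hneg] at ht ⊢
    have : -t / 2 ≤ |1 + t| := by rw [abs_of_neg (by linarith)]; linarith
    have := rpow_le_rpow (by linarith) this (by linarith : 0 ≤ p)
    nlinarith
  · rw [abs_of_pos hpos] at ht ⊢
    rw [abs_of_pos (by linarith)]
    have bernoulli : t ^ p + p * (t ^ p / t) ≤ (1 + t) ^ p := by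
      have h := one_add_mul_self_le_rpow_one_add (by linarith [one_div_pos.2 hpos] : -1 ≤ 1 / t)
        (by linarith : 1 ≤ p)
      have h' := mul_le_mul_of_nonneg_left h (rpow_nonneg hpos.le p)
      rw [← mul_rpow hpos.le (by positivity), show t * (1 + 1 / t) = 1 + t by field_simp; ring]
        at h'
      calc t ^ p + p * (t ^ p / t) = t ^ p * (1 + p * (1 / t)) := by ring
        _ ≤ (1 + t) ^ p := h'
    have linear : t ≤ t ^ p / t := by
      rw [le_div_iff₀ hpos, ← sq, ← rpow_two]
      exact rpow_le_rpow_of_exponent_le (by linarith) hp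
    have large : 1 + (t / 2) ^ p ≤ t ^ p := by
      have h1 : 1 ≤ (t / 2) ^ p := one_le_rpow (by linarith) (by linarith)
      have h2 : 2 ≤ (2 : ℝ) ^ p := by
        simpa using rpow_le_rpow_of_exponent_le (by norm_num : (1 : ℝ) ≤ 2) (by linarith : 1 ≤ p)
      rw [div_rpow hpos.le zero_le_two] at h1 ⊢
      rw [le_div_iff₀ (by positivity)] at h1
      field_simp
      nlinarith
    nlinarith

/-- Constant of the upper pointwise bound: `(p + 1) ^ p` and `p ^ p` control `|1 + t| ^ p` and
the linear term for `|t| > 1 / p`, and `p ^ 2` comes from `exp (p t) ≤ 1 + p t + (p t) ^ 2` for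
`|t| ≤ 1 / p`. -/
noncomputable def rosenthalConst (p : ℝ) : ℝ := (p + 1) ^ p + p ^ p + p ^ 2

lemma one_le_rosenthalConst {p : ℝ} (hp : 0 ≤ p) : 1 ≤ rosenthalConst p := by
  have := one_le_rpow (by linarith : (1 : ℝ) ≤ p + 1) hp
  have := rpow_nonneg hp p
  unfold rosenthalConst; nlinarith

lemma abs_one_add_rpow_le {p : ℝ} (hp : 2 ≤ p) (t : ℝ) :
    |1 + t| ^ p ≤ 1 + p * t + rosenthalConst p * (t ^ 2 + |t| ^ p) := by
  have hp0 : 0 < p := by linarith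
  have h1 : 1 ≤ (p + 1) ^ p := one_le_rpow (by linarith) hp0.le
  have h2 : 0 ≤ p ^ p := rpow_nonneg hp0.le p
  have h3 : 0 ≤ |t| ^ p := by positivity
  unfold rosenthalConst
  rcases le_or_gt (p * |t|) 1 with ht | ht
  · have hpt : |t * p| ≤ 1 := by rw [abs_mul, abs_of_pos hp0]; linarith
    have ht : -1 / 2 ≤ t := by nlinarith [neg_abs_le t]
    have exp_bound : |1 + t| ^ p ≤ exp (t * p) := by
      rw [exp_mul]
      refine rpow_le_rpow (abs_nonneg _) (abs_le.2 ⟨?_, ?_⟩) hp0.le <;> linarith [add_one_le_exp t]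
    have := (abs_le.1 (abs_exp_sub_one_sub_id_le hpt)).2
    nlinarith [sq_nonneg t]
  · have growth : |1 + t| ^ p ≤ (p + 1) ^ p * |t| ^ p := by
      rw [← mul_rpow (by linarith) (abs_nonneg t)]
      refine rpow_le_rpow (abs_nonneg _) ?_ hp0.le
      linarith [abs_add_le 1 t, abs_one (α := ℝ)]
    have linear : -(p * t) ≤ p ^ p * |t| ^ p := by
      rw [← mul_rpow hp0.le (abs_nonneg t)]
      have := self_le_rpow_of_one_le ht.le (by linarith : 1 ≤ p)
      nlinarith [neg_abs_le t]
    nlinarith [sq_nonneg t]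

lemma abs_add_rpow_ge {p : ℝ} (hp : 2 ≤ p) (a b : ℝ) :
    |a| ^ p + p * (|a| ^ (p - 2) * a * b) + (|b| / 2) ^ p ≤ |a + b| ^ p := by
  have hp0 : p ≠ 0 := by positivity
  rcases eq_or_ne a 0 with rfl | ha
  · simpa [zero_rpow hp0] using
      rpow_le_rpow (by positivity) (half_le_self (abs_nonneg b)) (by linarith : 0 ≤ p)
  obtain ⟨t, rfl⟩ : ∃ t, b = a * t := ⟨b / a, (mul_div_cancel₀ b ha).symm⟩
  have key := mul_le_mul_of_nonneg_left (one_add_mul_add_half_abs_rpow_le hp t)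
    (rpow_nonneg (abs_nonneg a) p)
  calc |a| ^ p + p * (|a| ^ (p - 2) * a * (a * t)) + (|a * t| / 2) ^ p
      = |a| ^ p * (1 + p * t + (|t| / 2) ^ p) := by
        rw [abs_mul, mul_div_assoc, mul_rpow (abs_nonneg a) (by positivity),
          ← abs_rpow_sub_two_mul_sq hp0 a]
        ring
    _ ≤ |a| ^ p * |1 + t| ^ p := key
    _ = |a + a * t| ^ p := by rw [← mul_rpow (abs_nonneg a) (abs_nonneg _), ← abs_mul, mul_one_add]

lemma abs_add_rpow_le {p : ℝ} (hp : 2 ≤ p) (a b : ℝ) :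
    |a + b| ^ p ≤ |a| ^ p + p * (|a| ^ (p - 2) * a * b) +
      rosenthalConst p * (|a| ^ (p - 2) * b ^ 2 + |b| ^ p) := by
  have hp0 : p ≠ 0 := by positivity
  rcases eq_or_ne a 0 with rfl | ha
  · have := one_le_rosenthalConst (by linarith : 0 ≤ p)
    simp only [abs_zero, zero_rpow hp0, zero_add, mul_zero, zero_mul]
    have : 0 ≤ (0 : ℝ) ^ (p - 2) * b ^ 2 := by positivity
    nlinarith [rpow_nonneg (abs_nonneg b) p]
  obtain ⟨t, rfl⟩ : ∃ t, b = a * t := ⟨b / a, (mul_div_cancel₀ b ha).symm⟩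
  have key := mul_le_mul_of_nonneg_left (abs_one_add_rpow_le hp t) (rpow_nonneg (abs_nonneg a) p)
  calc |a + a * t| ^ p = |a| ^ p * |1 + t| ^ p := by
        rw [← mul_rpow (abs_nonneg a) (abs_nonneg _), ← abs_mul, mul_one_add]
    _ ≤ |a| ^ p * (1 + p * t + rosenthalConst p * (t ^ 2 + |t| ^ p)) := key
    _ = |a| ^ p + p * (|a| ^ (p - 2) * a * (a * t)) +
          rosenthalConst p * (|a| ^ (p - 2) * (a * t) ^ 2 + |a * t| ^ p) := by
        rw [abs_mul, mul_rpow (abs_nonneg a) (abs_nonneg t), ← abs_rpow_sub_two_mul_sq hp0 a]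
        ring

section Moments

variable {Ω : Type*} [MeasurableSpace Ω] {μ : Measure Ω} {p : ℝ} {X : Ω → ℝ}

lemma toReal_eLpNorm_ofReal_rpow (hp : 0 < p) (hX : AEStronglyMeasurable X μ) :
    (eLpNorm X (ENNReal.ofReal p) μ).toReal ^ p = ∫ ω, |X ω| ^ p ∂μ := by
  rw [toReal_eLpNorm hX,
    lpNorm_eq_integral_norm_rpow_toReal (by simpa using hp) ENNReal.ofReal_ne_top hX,
    ENNReal.toReal_ofReal hp.le, rpow_inv_rpow (integral_nonneg fun _ ↦ by positivity) hp.ne']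
  simp only [Real.norm_eq_abs]

lemma toReal_eLpNorm_two_rpow_two (hX : AEStronglyMeasurable X μ) :
    (eLpNorm X 2 μ).toReal ^ (2 : ℝ) = ∫ ω, X ω ^ 2 ∂μ := by
  simpa [rpow_two] using toReal_eLpNorm_ofReal_rpow (p := 2) two_pos hX

lemma MeasureTheory.MemLp.integrable_abs_rpow [IsFiniteMeasure μ]
    (hX : MemLp X (ENNReal.ofReal p) μ) {q : ℝ} (hq : 0 ≤ q) (hqp : q ≤ p) :
    Integrable (fun ω ↦ |X ω| ^ q) μ := by
  simpa [ENNReal.toReal_ofReal hq] using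
    (hX.mono_exponent (ENNReal.ofReal_le_ofReal hqp)).integrable_norm_rpow'

lemma MeasureTheory.MemLp.integrable_abs_rpow_sub_two_mul [IsFiniteMeasure μ] (hp : 2 ≤ p)
    (hX : MemLp X (ENNReal.ofReal p) μ) : Integrable (fun ω ↦ |X ω| ^ (p - 2) * X ω) μ := by
  refine (hX.integrable_abs_rpow (q := p - 1) (by linarith) (by linarith)).mono' ?_
    (.of_forall fun ω ↦ ?_)
  · exact ((continuous_abs.rpow_const fun _ ↦ Or.inr (by linarith)).mul continuous_id)
      |>.comp_aestronglyMeasurable hX.1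
  · rw [Real.norm_eq_abs, abs_mul, abs_of_nonneg (by positivity), show p - 1 = p - 2 + 1 by ring,
      rpow_add' (abs_nonneg _) (by linarith), rpow_one]

lemma integral_abs_rpow_le_rpow_integral [IsProbabilityMeasure μ] (hp : 0 < p)
    (hX : MemLp X (ENNReal.ofReal p) μ) {q : ℝ} (hq : 0 ≤ q) (hqp : q ≤ p) :
    ∫ ω, |X ω| ^ q ∂μ ≤ (∫ ω, |X ω| ^ p ∂μ) ^ (q / p) := by
  have hcomp : ∀ ω, (|X ω| ^ p) ^ (q / p) = |X ω| ^ q := fun ω ↦ by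
    rw [← rpow_mul (abs_nonneg _), mul_div_cancel₀ q hp.ne']
  have jensen := (Real.concaveOn_rpow (div_nonneg hq hp.le) ((div_le_one hp).2 hqp)).le_map_integral
    (continuous_id.rpow_const fun _ ↦ Or.inr (div_nonneg hq hp.le)).continuousOn isClosed_Ici
    (.of_forall fun ω ↦ Set.mem_Ici.2 (rpow_nonneg (abs_nonneg (X ω)) p))
    (hX.integrable_abs_rpow hp.le le_rfl)
    (by simpa only [Function.comp_def, hcomp] using hX.integrable_abs_rpow hq hqp)
  simpa only [hcomp] using jensen

end Moments

section IndependentStep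

variable {Ω : Type*} [MeasurableSpace Ω] {μ : Measure Ω} {p : ℝ} {X Y : Ω → ℝ}

lemma ProbabilityTheory.IndepFun.indepFun_abs_rpow_sub_two_mul (hXY : IndepFun X Y μ) :
    IndepFun (fun ω ↦ |X ω| ^ (p - 2) * X ω) Y μ :=
  hXY.comp (by fun_prop : Measurable fun x : ℝ ↦ |x| ^ (p - 2) * x) measurable_id

variable [IsFiniteMeasure μ]

lemma ProbabilityTheory.IndepFun.integrable_abs_rpow_sub_two_mul_mul (hp : 2 ≤ p)
    (hXY : IndepFun X Y μ) (hX : MemLp X (ENNReal.ofReal p) μ) (hY : Integrable Y μ) :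
    Integrable (fun ω ↦ |X ω| ^ (p - 2) * X ω * Y ω) μ :=
  hXY.indepFun_abs_rpow_sub_two_mul.integrable_mul (hX.integrable_abs_rpow_sub_two_mul hp) hY

lemma ProbabilityTheory.IndepFun.integrable_abs_rpow_add_linear (hp : 2 ≤ p) (hXY : IndepFun X Y μ)
    (hX : MemLp X (ENNReal.ofReal p) μ) (hY : Integrable Y μ) :
    Integrable (fun ω ↦ |X ω| ^ p + p * (|X ω| ^ (p - 2) * X ω * Y ω)) μ :=
  (hX.integrable_abs_rpow (by linarith) le_rfl).fun_add
    ((hXY.integrable_abs_rpow_sub_two_mul_mul hp hX hY).const_mul p)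

/-- Independence kills the first-order term of the expansion of `|X + Y| ^ p` around `X`. -/
lemma ProbabilityTheory.IndepFun.integral_abs_rpow_add_linear (hp : 2 ≤ p) (hXY : IndepFun X Y μ)
    (hX : MemLp X (ENNReal.ofReal p) μ) (hY : Integrable Y μ) (hY0 : ∫ ω, Y ω ∂μ = 0) :
    ∫ ω, (|X ω| ^ p + p * (|X ω| ^ (p - 2) * X ω * Y ω)) ∂μ = ∫ ω, |X ω| ^ p ∂μ := by
  rw [integral_add (hX.integrable_abs_rpow (by linarith) le_rfl)
      ((hXY.integrable_abs_rpow_sub_two_mul_mul hp hX hY).const_mul p),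
    integral_const_mul, hXY.indepFun_abs_rpow_sub_two_mul.integral_fun_mul_eq_mul_integral
      (hX.integrable_abs_rpow_sub_two_mul hp).1 hY.1, hY0]
  simp

lemma ProbabilityTheory.IndepFun.le_integral_abs_add_rpow (hp : 2 ≤ p)
    (hXY : IndepFun X Y μ) (hX : MemLp X (ENNReal.ofReal p) μ) (hY : MemLp Y (ENNReal.ofReal p) μ)
    (hY0 : ∫ ω, Y ω ∂μ = 0) :
    ∫ ω, |X ω| ^ p ∂μ + (∫ ω, |Y ω| ^ p ∂μ) / 2 ^ p ≤ ∫ ω, |X ω + Y ω| ^ p ∂μ := by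
  have hY1 : Integrable Y μ := hY.integrable (ENNReal.one_le_ofReal.2 (by linarith))
  have hhalf : (fun ω ↦ (|Y ω| / 2) ^ p) = fun ω ↦ |Y ω| ^ p / 2 ^ p :=
    funext fun ω ↦ div_rpow (abs_nonneg _) zero_le_two p
  have hR : Integrable (fun ω ↦ (|Y ω| / 2) ^ p) μ := by
    simpa only [hhalf] using (hY.integrable_abs_rpow (by linarith) le_rfl).div_const _
  have h := integral_mono ((hXY.integrable_abs_rpow_add_linear hp hX hY1).fun_add hR)
    (by simpa using (hX.add hY).integrable_abs_rpow (by linarith) le_rfl)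
    fun ω ↦ abs_add_rpow_ge hp (X ω) (Y ω)
  rwa [integral_add (hXY.integrable_abs_rpow_add_linear hp hX hY1) hR,
    hXY.integral_abs_rpow_add_linear hp hX hY1 hY0, hhalf, integral_div] at h

lemma ProbabilityTheory.IndepFun.integral_abs_add_rpow_le [IsProbabilityMeasure μ] (hp : 2 ≤ p)
    (hXY : IndepFun X Y μ)
    (hX : MemLp X (ENNReal.ofReal p) μ) (hY : MemLp Y (ENNReal.ofReal p) μ)
    (hY0 : ∫ ω, Y ω ∂μ = 0) :
    ∫ ω, |X ω + Y ω| ^ p ∂μ ≤ ∫ ω, |X ω| ^ p ∂μ +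
      rosenthalConst p * ((∫ ω, |X ω| ^ p ∂μ) ^ ((p - 2) / p) * ∫ ω, Y ω ^ 2 ∂μ +
        ∫ ω, |Y ω| ^ p ∂μ) := by
  have hY1 : Integrable Y μ := hY.integrable (ENNReal.one_le_ofReal.2 (by linarith))
  have hY2 : Integrable (fun ω ↦ Y ω ^ 2) μ :=
    (hY.mono_exponent (by simpa using ENNReal.ofReal_le_ofReal hp)).integrable_sq
  have hXY' : IndepFun (fun ω ↦ |X ω| ^ (p - 2)) (fun ω ↦ Y ω ^ 2) μ :=
    hXY.comp (by fun_prop : Measurable fun x : ℝ ↦ |x| ^ (p - 2))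
      (by fun_prop : Measurable fun y : ℝ ↦ y ^ 2)
  have hX' := hX.integrable_abs_rpow (q := p - 2) (by linarith) (by linarith)
  have hprod : Integrable (fun ω ↦ |X ω| ^ (p - 2) * Y ω ^ 2) μ := hXY'.integrable_mul hX' hY2
  have hR : Integrable (fun ω ↦ |X ω| ^ (p - 2) * Y ω ^ 2 + |Y ω| ^ p) μ :=
    hprod.fun_add (hY.integrable_abs_rpow (by linarith) le_rfl)
  have h := integral_mono (by simpa using (hX.add hY).integrable_abs_rpow (by linarith) le_rfl)
    ((hXY.integrable_abs_rpow_add_linear hp hX hY1).fun_add (hR.const_mul (rosenthalConst p)))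
    fun ω ↦ abs_add_rpow_le hp (X ω) (Y ω)
  rw [integral_add (hXY.integrable_abs_rpow_add_linear hp hX hY1) (hR.const_mul _),
    hXY.integral_abs_rpow_add_linear hp hX hY1 hY0, integral_const_mul,
    integral_add hprod (hY.integrable_abs_rpow (by linarith) le_rfl),
    hXY'.integral_fun_mul_eq_mul_integral hX'.1 hY2.1] at h
  have hD := zero_le_one.trans (one_le_rosenthalConst (by linarith : 0 ≤ p))
  refine h.trans ?_
  gcongr
  exact integral_abs_rpow_le_rpow_integral (by linarith) hX (by linarith) (by linarith)

end IndependentStep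

section IndependentSum

variable {Ω ι : Type*} [MeasurableSpace Ω] {μ : Measure Ω} [IsProbabilityMeasure μ] {p : ℝ}
  {f : ι → Ω → ℝ}

lemma ProbabilityTheory.iIndepFun.le_integral_abs_sum_insert_rpow [DecidableEq ι] (hp : 2 ≤ p)
    (hf : iIndepFun f μ) (hmem : ∀ k, MemLp (f k) (ENNReal.ofReal p) μ)
    (hmean : ∀ k, ∫ ω, f k ω ∂μ = 0) {s : Finset ι} {i : ι} (hi : i ∉ s) :
    ∫ ω, |(∑ k ∈ s, f k) ω| ^ p ∂μ + (∫ ω, |f i ω| ^ p ∂μ) / 2 ^ p ≤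
      ∫ ω, |(∑ k ∈ insert i s, f k) ω| ^ p ∂μ := by
  simpa only [Finset.sum_insert hi, Pi.add_apply, add_comm (f i _)] using
    (hf.indepFun_finsetSum_of_notMem₀ (fun k ↦ (hmem k).1.aemeasurable) hi)
      |>.le_integral_abs_add_rpow hp
        (memLp_finsetSum' s fun k _ ↦ hmem k) (hmem i) (hmean i)

lemma ProbabilityTheory.iIndepFun.sum_integral_abs_rpow_div_le (hp : 2 ≤ p)
    (hf : iIndepFun f μ) (hmem : ∀ k, MemLp (f k) (ENNReal.ofReal p) μ)
    (hmean : ∀ k, ∫ ω, f k ω ∂μ = 0) (s : Finset ι) :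
    (∑ k ∈ s, ∫ ω, |f k ω| ^ p ∂μ) / 2 ^ p ≤ ∫ ω, |(∑ k ∈ s, f k) ω| ^ p ∂μ := by
  classical
  induction s using Finset.induction_on with
  | empty => simp only [Finset.sum_empty, zero_div]; positivity
  | insert i s hi ih =>
    rw [Finset.sum_insert hi, add_div]
    linarith [hf.le_integral_abs_sum_insert_rpow hp hmem hmean hi]

lemma ProbabilityTheory.iIndepFun.integral_abs_sum_rpow_le (hp : 2 ≤ p)
    (hf : iIndepFun f μ) (hmem : ∀ k, MemLp (f k) (ENNReal.ofReal p) μ)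
    (hmean : ∀ k, ∫ ω, f k ω ∂μ = 0) (s : Finset ι) :
    ∫ ω, |(∑ k ∈ s, f k) ω| ^ p ∂μ ≤ rosenthalConst p *
      ((∫ ω, |(∑ k ∈ s, f k) ω| ^ p ∂μ) ^ ((p - 2) / p) * ∑ k ∈ s, ∫ ω, f k ω ^ 2 ∂μ +
        ∑ k ∈ s, ∫ ω, |f k ω| ^ p ∂μ) := by
  classical
  induction s using Finset.induction_on with
  | empty => simp [zero_rpow (by positivity : p ≠ 0)]
  | insert i s hi ih =>
    set T := ∫ ω, |(∑ k ∈ s, f k) ω| ^ p ∂μ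
    set T' := ∫ ω, |(∑ k ∈ insert i s, f k) ω| ^ p ∂μ
    have hD := zero_le_one.trans (one_le_rosenthalConst (by linarith : 0 ≤ p))
    have step : T' ≤ T + rosenthalConst p *
        (T ^ ((p - 2) / p) * ∫ ω, f i ω ^ 2 ∂μ + ∫ ω, |f i ω| ^ p ∂μ) := by
      simpa only [T, T', Finset.sum_insert hi, Pi.add_apply, add_comm (f i _)] using
        (hf.indepFun_finsetSum_of_notMem₀ (fun k ↦ (hmem k).1.aemeasurable) hi)
          |>.integral_abs_add_rpow_le hp (memLp_finsetSum' s fun k _ ↦ hmem k) (hmem i) (hmean i)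
    have mono : T ^ ((p - 2) / p) ≤ T' ^ ((p - 2) / p) := by
      refine rpow_le_rpow (by positivity) ?_ (div_nonneg (by linarith) (by linarith))
      linarith [hf.le_integral_abs_sum_insert_rpow hp hmem hmean hi,
        (by positivity : 0 ≤ (∫ ω, |f i ω| ^ p ∂μ) / 2 ^ p)]
    have hV : 0 ≤ ∑ k ∈ insert i s, ∫ ω, f k ω ^ 2 ∂μ := by positivity
    calc T' ≤ rosenthalConst p * (T ^ ((p - 2) / p) * ∑ k ∈ insert i s, ∫ ω, f k ω ^ 2 ∂μ +
          ∑ k ∈ insert i s, ∫ ω, |f k ω| ^ p ∂μ) := by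
          rw [Finset.sum_insert hi, Finset.sum_insert hi]
          linarith
      _ ≤ _ := by gcongr

end IndependentSum

lemma rpow_inv_le_mul_max_of_le_mul_rpow_add {p D T σ A : ℝ} (hp : 1 ≤ p) (hD : 1 ≤ 2 * D)
    (hT : 0 ≤ T) (hσ : 0 ≤ σ) (hA : 0 ≤ A) (h : T ≤ D * (T ^ ((p - 2) / p) * σ + A)) :
    T ^ (1 / p) ≤ 2 * D * max (A ^ (1 / p)) (σ ^ (1 / 2 : ℝ)) := by
  have hp0 : 0 < p := by linarith
  rcases hT.eq_or_lt with rfl | hT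
  · rw [zero_rpow (by positivity)]; positivity
  have split : T = T ^ ((p - 2) / p) * T ^ (2 / p) := by
    rw [← rpow_add hT, ← add_div, sub_add_cancel, div_self hp0.ne', rpow_one]
  rcases le_total A (T ^ ((p - 2) / p) * σ) with hc | hc
  · have h2 : T ^ (2 / p) ≤ 2 * D * σ := by
      have : T ^ ((p - 2) / p) * T ^ (2 / p) ≤ T ^ ((p - 2) / p) * (2 * D * σ) := by
        rw [← split]; nlinarith
      exact le_of_mul_le_mul_left this (by positivity)
    calc T ^ (1 / p) = (T ^ (2 / p)) ^ (1 / 2 : ℝ) := by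
          rw [← rpow_mul hT.le]; congr 1; field_simp
      _ ≤ (2 * D * σ) ^ (1 / 2 : ℝ) := by gcongr
      _ = (2 * D) ^ (1 / 2 : ℝ) * σ ^ (1 / 2 : ℝ) := mul_rpow (by linarith) hσ
      _ ≤ 2 * D * σ ^ (1 / 2 : ℝ) := by gcongr; exact rpow_le_self_of_one_le hD (by norm_num)
      _ ≤ 2 * D * max (A ^ (1 / p)) (σ ^ (1 / 2 : ℝ)) := by gcongr; exact le_max_right _ _
  · calc T ^ (1 / p) ≤ (2 * D * A) ^ (1 / p) := by gcongr; nlinarith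
      _ = (2 * D) ^ (1 / p) * A ^ (1 / p) := mul_rpow (by linarith) hA
      _ ≤ 2 * D * A ^ (1 / p) := by
          gcongr; exact rpow_le_self_of_one_le hD ((div_le_one hp0).2 hp)
      _ ≤ 2 * D * max (A ^ (1 / p)) (σ ^ (1 / 2 : ℝ)) := by gcongr; exact le_max_left _ _

section Norms

variable {Ω ι : Type*} [MeasurableSpace Ω] {μ : Measure Ω} [IsProbabilityMeasure μ] {p : ℝ}
  {f : ι → Ω → ℝ}

lemma ProbabilityTheory.iIndepFun.integral_sum_sq (hf : iIndepFun f μ)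
    (hmem : ∀ k, MemLp (f k) 2 μ) (hmean : ∀ k, ∫ ω, f k ω ∂μ = 0) (s : Finset ι) :
    ∫ ω, (∑ k ∈ s, f k) ω ^ 2 ∂μ = ∑ k ∈ s, ∫ ω, f k ω ^ 2 ∂μ := by
  have hmean_sum : ∫ ω, (∑ k ∈ s, f k) ω ∂μ = 0 := by
    simp [integral_finsetSum s fun k _ ↦ (hmem k).integrable one_le_two, hmean]
  rw [← variance_of_integral_eq_zero (memLp_finsetSum' s fun k _ ↦ hmem k).aemeasurable hmean_sum,
    IndepFun.variance_sum (fun k _ ↦ hmem k) fun i _ j _ hij ↦ hf.indepFun hij]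
  exact Finset.sum_congr rfl fun k _ ↦ variance_of_integral_eq_zero (hmem k).aemeasurable (hmean k)

lemma ProbabilityTheory.iIndepFun.sum_toReal_eLpNorm_rpow_rpow_le (hp : 2 ≤ p)
    (hf : iIndepFun f μ) (hmem : ∀ k, MemLp (f k) (ENNReal.ofReal p) μ)
    (hmean : ∀ k, ∫ ω, f k ω ∂μ = 0) (s : Finset ι) :
    (∑ k ∈ s, (eLpNorm (f k) (ENNReal.ofReal p) μ).toReal ^ p) ^ (1 / p) ≤
      2 * (eLpNorm (∑ k ∈ s, f k) (ENNReal.ofReal p) μ).toReal := by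
  have hp0 : 0 < p := by linarith
  have h := hf.sum_integral_abs_rpow_div_le hp hmem hmean s
  rw [div_le_iff₀ (by positivity), ← toReal_eLpNorm_ofReal_rpow hp0
    (memLp_finsetSum' s fun k _ ↦ hmem k).1, ← mul_rpow (by positivity) zero_le_two] at h
  simp only [← toReal_eLpNorm_ofReal_rpow hp0 (hmem _).1] at h
  calc _ ≤ (((eLpNorm (∑ k ∈ s, f k) (ENNReal.ofReal p) μ).toReal * 2) ^ p) ^ (1 / p) := by
        gcongr
    _ = _ := by rw [one_div, rpow_rpow_inv (by positivity) hp0.ne', mul_comm]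

lemma ProbabilityTheory.iIndepFun.sum_toReal_eLpNorm_two_rpow_rpow_le (hp : 2 ≤ p)
    (hf : iIndepFun f μ) (hmem : ∀ k, MemLp (f k) (ENNReal.ofReal p) μ)
    (hmean : ∀ k, ∫ ω, f k ω ∂μ = 0) (s : Finset ι) :
    (∑ k ∈ s, (eLpNorm (f k) 2 μ).toReal ^ (2 : ℝ)) ^ (1 / 2 : ℝ) ≤
      (eLpNorm (∑ k ∈ s, f k) (ENNReal.ofReal p) μ).toReal := by
  have h2p : (2 : ENNReal) ≤ ENNReal.ofReal p := by simpa using ENNReal.ofReal_le_ofReal hp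
  have hS := memLp_finsetSum' s fun k _ ↦ hmem k
  simp only [toReal_eLpNorm_two_rpow_two (hmem _).1]
  rw [← hf.integral_sum_sq (fun k ↦ (hmem k).mono_exponent h2p) hmean,
    ← toReal_eLpNorm_two_rpow_two hS.1, one_div, rpow_rpow_inv (by positivity) two_ne_zero]
  exact ENNReal.toReal_mono hS.eLpNorm_ne_top (eLpNorm_le_eLpNorm_of_exponent_le h2p hS.1)

lemma ProbabilityTheory.iIndepFun.toReal_eLpNorm_sum_le (hp : 2 ≤ p)
    (hf : iIndepFun f μ) (hmem : ∀ k, MemLp (f k) (ENNReal.ofReal p) μ)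
    (hmean : ∀ k, ∫ ω, f k ω ∂μ = 0) (s : Finset ι) :
    (eLpNorm (∑ k ∈ s, f k) (ENNReal.ofReal p) μ).toReal ≤ 2 * rosenthalConst p *
      max ((∑ k ∈ s, (eLpNorm (f k) (ENNReal.ofReal p) μ).toReal ^ p) ^ (1 / p))
        ((∑ k ∈ s, (eLpNorm (f k) 2 μ).toReal ^ (2 : ℝ)) ^ (1 / 2 : ℝ)) := by
  have hp0 : 0 < p := by linarith
  have hS := (memLp_finsetSum' s fun k _ ↦ hmem k).1
  simp only [toReal_eLpNorm_two_rpow_two (hmem _).1, toReal_eLpNorm_ofReal_rpow hp0 (hmem _).1]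
  rw [← rpow_rpow_inv ENNReal.toReal_nonneg hp0.ne', ← one_div, toReal_eLpNorm_ofReal_rpow hp0 hS]
  exact rpow_inv_le_mul_max_of_le_mul_rpow_add (by linarith)
    (by linarith [one_le_rosenthalConst hp0.le]) (by positivity) (by positivity) (by positivity)
    (hf.integral_abs_sum_rpow_le hp hmem hmean s)

end Norms

/-- Rosenthal's classical inequality: for `2 ≤ p < ∞` there is a constant `c_p`
depending only on `p` such that for any probability space and any independent
mean-zero random variables `f_1, …, f_n ∈ L_p`,
`(1/c_p) max { (∑‖f_k‖_p^p)^{1/p}, (∑‖f_k‖_2^2)^{1/2} } ≤ ‖∑ f_k‖_p ≤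
 c_p max { (∑‖f_k‖_p^p)^{1/p}, (∑‖f_k‖_2^2)^{1/2} }`. -/
theorem stmt2 (p : ℝ) (hp : 2 ≤ p) :
    ∃ c : ℝ, 0 < c ∧
      ∀ (Ω : Type) (_ : MeasurableSpace Ω) (μ : Measure Ω), IsProbabilityMeasure μ →
        ∀ (n : ℕ) (f : Fin n → Ω → ℝ),
          (∀ k, Measurable (f k)) →
          iIndepFun f μ →
          (∀ k, MemLp (f k) (ENNReal.ofReal p) μ) →
          (∀ k, ∫ x, f k x ∂μ = 0) →
          (1 / c) *
              max ((∑ k, (eLpNorm (f k) (ENNReal.ofReal p) μ).toReal ^ p) ^ (1 / p))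
                ((∑ k, (eLpNorm (f k) 2 μ).toReal ^ (2 : ℝ)) ^ ((1 : ℝ) / 2)) ≤
            (eLpNorm (∑ k, f k) (ENNReal.ofReal p) μ).toReal ∧
          (eLpNorm (∑ k, f k) (ENNReal.ofReal p) μ).toReal ≤
            c *
              max ((∑ k, (eLpNorm (f k) (ENNReal.ofReal p) μ).toReal ^ p) ^ (1 / p))
                ((∑ k, (eLpNorm (f k) 2 μ).toReal ^ (2 : ℝ)) ^ ((1 : ℝ) / 2)) := by
  have hD := one_le_rosenthalConst (by linarith : 0 ≤ p)
  refine ⟨2 * rosenthalConst p, by linarith, fun Ω _ μ _ n f _ hf hmem hmean ↦ ?_⟩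
  refine ⟨?_, hf.toReal_eLpNorm_sum_le hp hmem hmean Finset.univ⟩
  have hS : 0 ≤ (eLpNorm (∑ k, f k) (ENNReal.ofReal p) μ).toReal := ENNReal.toReal_nonneg
  rw [one_div_mul_eq_div, div_le_iff₀ (by linarith), max_le_iff]
  constructor
  · nlinarith [hf.sum_toReal_eLpNorm_rpow_rpow_le hp hmem hmean Finset.univ]
  · nlinarith [hf.sum_toReal_eLpNorm_two_rpow_rpow_le hp hmem hmean Finset.univ]
end

section
/- Let $H$ be a Hilbert space, $n \ge 1$, and $v_1,\dots,v_n, w_1,\dots,w_n, a_1,\dots,a_n, b_1,\dots,b_n \in B(H)$ with $\|\sum_k v_k v_k^*\| \le 1$ and $\|\sum_k w_k^* w_k\| \le 1$. Then $\|\sum_{k=1}^n v_k a_k b_k w_k\| \le \|\sum_{k=1}^n a_k a_k^*\|^{1/2} \, \|\sum_{k=1}^n b_k^* b_k\|^{1/2}$. -/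
/-!
Write `T = ∑ₖ rₖ cₖ` with `rₖ = vₖ aₖ` and `cₖ = bₖ wₖ`. For unit vectors `x`, `y`,
`⟪T x, y⟫ = ∑ₖ ⟪cₖ x, rₖ* y⟫`, and the Cauchy–Schwarz inequality in `ℝⁿ` bounds this by
`(∑ₖ ‖cₖ x‖²)^{1/2} (∑ₖ ‖rₖ* y‖²)^{1/2}`; the two sums are the quadratic forms of
`∑ cₖ* cₖ` and `∑ rₖ rₖ*`. For the second estimate, `aₖ aₖ* ≤ ∑ⱼ aⱼ aⱼ* ≤ ‖∑ⱼ aⱼ aⱼ*‖`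
gives `∑ₖ vₖ aₖ aₖ* vₖ* ≤ ‖∑ⱼ aⱼ aⱼ*‖ ∑ₖ vₖ vₖ*`, and similarly on the column side.
-/

open RCLike
open scoped InnerProductSpace

namespace ContinuousLinearMap

variable {𝕜 E ι : Type*} [RCLike 𝕜] [NormedAddCommGroup E] [InnerProductSpace 𝕜 E]
  [CompleteSpace E] [Fintype ι]

theorem sum_norm_apply_sq_le (c : ι → E →L[𝕜] E) (x : E) :
    ∑ k, ‖c k x‖ ^ 2 ≤ ‖∑ k, star (c k) * c k‖ * ‖x‖ ^ 2 := by
  have hquad : ∑ k, ‖c k x‖ ^ 2 = re ⟪(∑ k, star (c k) * c k) x, x⟫_𝕜 := by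
    simp only [sum_apply, sum_inner, map_sum, apply_norm_sq_eq_inner_adjoint_left,
      star_eq_adjoint]
    rfl
  calc ∑ k, ‖c k x‖ ^ 2 ≤ ‖(∑ k, star (c k) * c k) x‖ * ‖x‖ := hquad ▸ re_inner_le_norm _ _
    _ ≤ ‖∑ k, star (c k) * c k‖ * ‖x‖ * ‖x‖ := by gcongr; exact le_opNorm _ _
    _ = ‖∑ k, star (c k) * c k‖ * ‖x‖ ^ 2 := by ring

theorem sum_norm_apply_apply_sq_le (c d : ι → E →L[𝕜] E) (x : E) :
    ∑ k, ‖c k (d k x)‖ ^ 2 ≤ ‖∑ j, star (c j) * c j‖ * ‖∑ k, star (d k) * d k‖ * ‖x‖ ^ 2 :=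
  calc ∑ k, ‖c k (d k x)‖ ^ 2 ≤ ∑ k, ‖∑ j, star (c j) * c j‖ * ‖d k x‖ ^ 2 := by
        gcongr with k
        exact (Finset.single_le_sum (f := fun j ↦ ‖c j (d k x)‖ ^ 2) (fun _ _ ↦ by positivity)
          (Finset.mem_univ k)).trans (sum_norm_apply_sq_le c _)
    _ ≤ ‖∑ j, star (c j) * c j‖ * (‖∑ k, star (d k) * d k‖ * ‖x‖ ^ 2) := by
        rw [← Finset.mul_sum]
        gcongr
        exact sum_norm_apply_sq_le d x
    _ = ‖∑ j, star (c j) * c j‖ * ‖∑ k, star (d k) * d k‖ * ‖x‖ ^ 2 := by ring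

theorem norm_sum_mul_le_of_sum_norm_sq_le (r c : ι → E →L[𝕜] E) {A B : ℝ}
    (hr : ∀ y, ∑ k, ‖star (r k) y‖ ^ 2 ≤ A * ‖y‖ ^ 2)
    (hc : ∀ x, ∑ k, ‖c k x‖ ^ 2 ≤ B * ‖x‖ ^ 2) :
    ‖∑ k, r k * c k‖ ≤ √A * √B := by
  refine opNorm_le_of_re_inner_le (by positivity) fun x y hx hy ↦ ?_
  calc re ⟪(∑ k, r k * c k) x, y⟫_𝕜 = ∑ k, re ⟪c k x, star (r k) y⟫_𝕜 := by
        simp only [sum_apply, sum_inner, map_sum, star_eq_adjoint, adjoint_inner_right]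
        rfl
    _ ≤ ∑ k, ‖star (r k) y‖ * ‖c k x‖ := by
        gcongr with k
        rw [mul_comm]
        exact re_inner_le_norm _ _
    _ ≤ √(∑ k, ‖star (r k) y‖ ^ 2) * √(∑ k, ‖c k x‖ ^ 2) := Real.sum_mul_le_sqrt_mul_sqrt _ _ _
    _ ≤ √A * √B := by
        gcongr
        · simpa [hy] using hr y
        · simpa [hx] using hc x

theorem norm_sum_mul_le_sqrt_mul_sqrt (r c : ι → E →L[𝕜] E) :
    ‖∑ k, r k * c k‖ ≤ √‖∑ k, r k * star (r k)‖ * √‖∑ k, star (c k) * c k‖ :=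
  norm_sum_mul_le_of_sum_norm_sq_le r c
    (by simpa only [star_star] using sum_norm_apply_sq_le fun k ↦ star (r k))
    (sum_norm_apply_sq_le c)

end ContinuousLinearMap

open ContinuousLinearMap

/-- Operator Cauchy–Schwarz / row–column factorization: for operators on a Hilbert
space with `‖∑ v_k v_k*‖ ≤ 1` and `‖∑ w_k* w_k‖ ≤ 1`,
`‖∑ v_k a_k b_k w_k‖ ≤ ‖∑ v_k a_k a_k* v_k*‖^{1/2} ‖∑ w_k* b_k* b_k w_k‖^{1/2}`
(the exact row–column factorization), and consequently
`‖∑ v_k a_k b_k w_k‖ ≤ ‖∑ a_k a_k*‖^{1/2} ‖∑ b_k* b_k‖^{1/2}`. -/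
theorem stmt17 {H : Type*} [NormedAddCommGroup H] [InnerProductSpace ℂ H]
    [CompleteSpace H] (n : ℕ) (v w a b : Fin n → H →L[ℂ] H)
    (hv : ‖∑ k, v k * star (v k)‖ ≤ 1) (hw : ‖∑ k, star (w k) * w k‖ ≤ 1) :
    ‖∑ k, v k * a k * b k * w k‖ ≤
      Real.sqrt ‖∑ k, v k * a k * star (a k) * star (v k)‖ *
        Real.sqrt ‖∑ k, star (w k) * star (b k) * b k * w k‖ ∧
    ‖∑ k, v k * a k * b k * w k‖ ≤
      Real.sqrt ‖∑ k, a k * star (a k)‖ * Real.sqrt ‖∑ k, star (b k) * b k‖ := by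
  have hfactor : ∑ k, v k * a k * b k * w k = ∑ k, (v k * a k) * (b k * w k) := by
    simp only [mul_assoc]
  have hrow (y : H) : ∑ k, ‖star (v k * a k) y‖ ^ 2 ≤ ‖∑ k, a k * star (a k)‖ * ‖y‖ ^ 2 :=
    calc ∑ k, ‖star (v k * a k) y‖ ^ 2
        ≤ ‖∑ k, a k * star (a k)‖ * ‖∑ k, v k * star (v k)‖ * ‖y‖ ^ 2 := by
          simpa only [star_mul, star_star, mul_apply_eq_comp] using
            sum_norm_apply_apply_sq_le (fun k ↦ star (a k)) (fun k ↦ star (v k)) y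
      _ ≤ ‖∑ k, a k * star (a k)‖ * ‖y‖ ^ 2 := by
          gcongr
          exact mul_le_of_le_one_right (norm_nonneg _) hv
  have hcol (x : H) : ∑ k, ‖(b k * w k) x‖ ^ 2 ≤ ‖∑ k, star (b k) * b k‖ * ‖x‖ ^ 2 :=
    calc ∑ k, ‖(b k * w k) x‖ ^ 2
        ≤ ‖∑ k, star (b k) * b k‖ * ‖∑ k, star (w k) * w k‖ * ‖x‖ ^ 2 :=
          sum_norm_apply_apply_sq_le b w x
      _ ≤ ‖∑ k, star (b k) * b k‖ * ‖x‖ ^ 2 := by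
          gcongr
          exact mul_le_of_le_one_right (norm_nonneg _) hw
  rw [hfactor]
  refine ⟨?_, norm_sum_mul_le_of_sum_norm_sq_le _ _ hrow hcol⟩
  simpa only [star_mul, mul_assoc] using
    norm_sum_mul_le_sqrt_mul_sqrt (fun k ↦ v k * a k) (fun k ↦ b k * w k)
end
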